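/- arXiv:2402.05674 — 2 statements merged into one kernel-verified Lean document; each statement's English description precedes it below -/
import Mathlib

section
/- Let g : ℝ → ℝ be a convex, non-increasing function, let Σ be a symmetric positive definite d×d real matrix, let θ, x ∈ ℝ^d with θ ≠ 0, y ∈ {-1,1}, and ε ≥ 0. Then the maximum of g(y⋅θᵀ(x+δ)) over all δ ∈ ℝ^d with δᵀΣ⁻¹δ ≤ ε² equals g(y⋅θᵀx − ε√(θᵀΣθ)). -/
/-!
By Cauchy–Schwarz for the inner product `⟨u, v⟩ = uᵀ S⁻¹ v`, applied to `u = S θ`, every `δ` in the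
ellipsoid `δᵀ S⁻¹ δ ≤ ε²` has `|θᵀ δ| ≤ ε √(θᵀ S θ)`, with equality at `δ = -(ε / √(θᵀ S θ)) S θ`.
Replacing `θ` by `y θ` (which leaves `θᵀ S θ` unchanged since `y² = 1`), the argument of `g` is
minimised at `y θᵀ x - ε √(θᵀ S θ)`, and an antitone `g` turns this minimum into the maximum.
-/

open Matrix

namespace Matrix

variable {n : Type*} [Fintype n] [DecidableEq n]

theorem PosSemidef.dotProduct_mulVec_mul_le {M : Matrix n n ℝ} (hM : M.PosSemidef) (u v : n → ℝ) :
    (u ⬝ᵥ (M *ᵥ v)) * (v ⬝ᵥ (M *ᵥ u)) ≤ (u ⬝ᵥ (M *ᵥ u)) * (v ⬝ᵥ (M *ᵥ v)) := by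
  simpa only [toLinearMap₂'_apply'] using
    LinearMap.BilinForm.apply_mul_apply_le_of_forall_zero_le (toLinearMap₂' ℝ M)
      (fun w ↦ by simpa only [toLinearMap₂'_apply', star_trivial] using hM.dotProduct_mulVec_nonneg w)
      u v

variable {S : Matrix n n ℝ}

theorem PosDef.inv_mulVec_mulVec (hS : S.PosDef) (v : n → ℝ) : S⁻¹ *ᵥ (S *ᵥ v) = v := by
  rw [mulVec_mulVec, nonsing_inv_mul S hS.det_pos.ne'.isUnit, one_mulVec]

theorem PosDef.sq_dotProduct_le (hS : S.PosDef) (θ δ : n → ℝ) :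
    (θ ⬝ᵥ δ) ^ 2 ≤ (θ ⬝ᵥ (S *ᵥ θ)) * (δ ⬝ᵥ (S⁻¹ *ᵥ δ)) := by
  have hsymm : Sᵀ = S := by
    simpa only [conjTranspose_eq_transpose_of_trivial] using hS.isHermitian.eq
  have hswap (w : n → ℝ) : (S *ᵥ θ) ⬝ᵥ w = θ ⬝ᵥ (S *ᵥ w) := by
    rw [dotProduct_mulVec, ← mulVec_transpose, hsymm]
  have := hS.inv.posSemidef.dotProduct_mulVec_mul_le (S *ᵥ θ) δ
  rwa [hS.inv_mulVec_mulVec, hswap, hswap, mulVec_mulVec, mul_nonsing_inv S hS.det_pos.ne'.isUnit,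
    one_mulVec, dotProduct_comm δ θ, ← sq] at this

theorem PosDef.isLeast_dotProduct_image_ellipsoid (hS : S.PosDef) (θ : n → ℝ) {ε : ℝ}
    (hε : 0 ≤ ε) :
    IsLeast ((θ ⬝ᵥ ·) '' {δ | δ ⬝ᵥ (S⁻¹ *ᵥ δ) ≤ ε ^ 2}) (-(ε * √(θ ⬝ᵥ (S *ᵥ θ)))) := by
  set a := θ ⬝ᵥ (S *ᵥ θ)
  have ha : 0 ≤ a := by simpa only [star_trivial] using hS.posSemidef.dotProduct_mulVec_nonneg θ
  refine ⟨?_, ?_⟩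
  · rcases ha.eq_or_lt with ha0 | ha
    · exact ⟨0, by simp [sq_nonneg], by simp [← ha0]⟩
    have hsqrt : √a ^ 2 = a := Real.sq_sqrt ha.le
    refine ⟨-(ε / √a) • (S *ᵥ θ), ?_, ?_⟩
    · simp only [Set.mem_ofPred_eq, mulVec_smul, hS.inv_mulVec_mulVec, dotProduct_smul,
        smul_dotProduct, smul_eq_mul, dotProduct_comm (S *ᵥ θ) θ]
      field_simp
      rw [hsqrt]
    · simp only [dotProduct_smul, smul_eq_mul]
      field_simp
      rw [hsqrt]
  · rintro _ ⟨δ, hδ, rfl⟩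
    have hsq : (θ ⬝ᵥ δ) ^ 2 ≤ (ε * √a) ^ 2 := calc
      (θ ⬝ᵥ δ) ^ 2 ≤ a * (δ ⬝ᵥ (S⁻¹ *ᵥ δ)) := hS.sq_dotProduct_le θ δ
      _ ≤ a * ε ^ 2 := mul_le_mul_of_nonneg_left hδ ha
      _ = (ε * √a) ^ 2 := by rw [mul_pow, Real.sq_sqrt ha, mul_comm]
    exact (abs_le_of_sq_le_sq' hsq (by positivity)).1

end Matrix

theorem adversarial_inner_max_general
    {d : ℕ} (g : ℝ → ℝ) (hg_mono : Antitone g)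
    (S : Matrix (Fin d) (Fin d) ℝ) (hSpd : S.PosDef)
    (θ x : Fin d → ℝ) (y : ℝ) (hy : y = 1 ∨ y = -1)
    (ε : ℝ) (hε : 0 ≤ ε) :
    IsGreatest {v : ℝ | ∃ δ : Fin d → ℝ, δ ⬝ᵥ (S⁻¹ *ᵥ δ) ≤ ε ^ 2 ∧
        v = g (y * (θ ⬝ᵥ (x + δ)))}
      (g (y * (θ ⬝ᵥ x) - ε * Real.sqrt (θ ⬝ᵥ (S *ᵥ θ)))) := by
  have hy2 : y * y = 1 := by rcases hy with rfl | rfl <;> norm_num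
  have hyθ : (y • θ) ⬝ᵥ (S *ᵥ (y • θ)) = θ ⬝ᵥ (S *ᵥ θ) := by
    simp only [mulVec_smul, dotProduct_smul, smul_dotProduct, smul_eq_mul, ← mul_assoc, hy2,
      one_mul]
  have hmin := hSpd.isLeast_dotProduct_image_ellipsoid (y • θ) hε
  rw [hyθ] at hmin
  have hg : Antitone fun t ↦ g (y * (θ ⬝ᵥ x) + t) := hg_mono.comp_monotone fun _ _ ↦ by simp
  have hset : {v : ℝ | ∃ δ : Fin d → ℝ, δ ⬝ᵥ (S⁻¹ *ᵥ δ) ≤ ε ^ 2 ∧ v = g (y * (θ ⬝ᵥ (x + δ)))} =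
      (fun t ↦ g (y * (θ ⬝ᵥ x) + t)) '' ((y • θ ⬝ᵥ ·) '' {δ | δ ⬝ᵥ (S⁻¹ *ᵥ δ) ≤ ε ^ 2}) := by
    ext v
    simp [dotProduct_add, mul_add, eq_comm]
  rw [hset, sub_eq_add_neg]
  exact hg.map_isLeast hmin

/-- For a convex non-increasing loss `g`, a symmetric positive
definite matrix `S`, `θ ≠ 0`, `y ∈ {-1,1}` and `ε ≥ 0`, the maximum of
`g (y * θᵀ(x+δ))` over the ellipsoid `{δ : δᵀ S⁻¹ δ ≤ ε²}` equals
`g (y * θᵀx - ε * √(θᵀ S θ))`. -/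
theorem adversarial_inner_max
    {d : ℕ} (g : ℝ → ℝ) (hg_conv : ConvexOn ℝ Set.univ g) (hg_mono : Antitone g)
    (S : Matrix (Fin d) (Fin d) ℝ) (hSsymm : S.IsSymm) (hSpd : S.PosDef)
    (θ x : Fin d → ℝ) (hθ : θ ≠ 0) (y : ℝ) (hy : y = 1 ∨ y = -1)
    (ε : ℝ) (hε : 0 ≤ ε) :
    IsGreatest {v : ℝ | ∃ δ : Fin d → ℝ, δ ⬝ᵥ (S⁻¹ *ᵥ δ) ≤ ε ^ 2 ∧
        v = g (y * (θ ⬝ᵥ (x + δ)))}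
      (g (y * (θ ⬝ᵥ x) - ε * Real.sqrt (θ ⬝ᵥ (S *ᵥ θ)))) :=
  adversarial_inner_max_general g hg_mono S hSpd θ x y hy ε hε
end

section
/- For b ∈ ℝ and a > 0, ∫₀^b e^{−x²} erfc(a x) dx = (1/(2√π a)) [ −4πa·T(√2 a b, 1/a) + πa·erf(b)·erfc(ab) + 2a·arctan(1/a) ], where T is Owen's T function. -/
open Real

/-- The error function `erf x = (2/√π) ∫₀ˣ e^{-t²} dt`. -/
noncomputable def erf (x : ℝ) : ℝ :=
  (2 / Real.sqrt π) * ∫ t in (0:ℝ)..x, Real.exp (-t ^ 2)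

/-- The complementary error function `erfc x = 1 - erf x`. -/
noncomputable def erfc (x : ℝ) : ℝ := 1 - erf x

/-- Owen's T function `T(h,a) = (1/(2π)) ∫₀^a exp(−h²(1+x²)/2)/(1+x²) dx`. -/
noncomputable def owenT (h a : ℝ) : ℝ :=
  (1 / (2 * π)) * ∫ x in (0:ℝ)..a, Real.exp (-h ^ 2 * (1 + x ^ 2) / 2) / (1 + x ^ 2)

/-!
Both sides vanish at `b = 0`, since `T(0, c) = arctan c / (2π)`. Differentiating under the
integral sign and substituting `u = h t / √2` gives
`∂ₕ T(h, c) = -e^{-h²/2} erf(h c / √2) / (2√(2π))`, so `b ↦ T(√2 a b, 1/a)` has derivative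
`-(a / (2√π)) e^{-a²b²} erf b`. In the derivative of the right-hand side this cancels the
product-rule term in which `erfc (a b)` is differentiated, and what remains is `e^{-b²} erfc (a b)`.
-/

lemma erf_zero : erf 0 = 0 := by simp [erf]

lemma hasDerivAt_erf (x : ℝ) : HasDerivAt erf (2 / √π * exp (-x ^ 2)) x :=
  ((by fun_prop : Continuous fun t : ℝ => exp (-t ^ 2)).integral_hasStrictDerivAt 0 x).hasDerivAt
    |>.const_mul _

lemma hasDerivAt_erfc (x : ℝ) : HasDerivAt erfc (-(2 / √π * exp (-x ^ 2))) x :=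
  (hasDerivAt_erf x).const_sub 1

@[fun_prop]
lemma continuous_erf : Continuous erf :=
  continuous_iff_continuousAt.2 fun x => (hasDerivAt_erf x).continuousAt

@[fun_prop]
lemma continuous_erfc : Continuous erfc :=
  continuous_const.sub continuous_erf

lemma mul_integral_exp_neg_mul_sq (c x : ℝ) :
    c * ∫ t in (0:ℝ)..x, exp (-(c * t) ^ 2) = √π / 2 * erf (c * x) := by
  rw [← smul_eq_mul, intervalIntegral.smul_integral_comp_mul_left (fun u => exp (-u ^ 2)),
    mul_zero, erf]
  field_simp

lemma owenT_zero_left (c : ℝ) : owenT 0 c = arctan c / (2 * π) := by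
  simp only [owenT, one_div, ne_eq, OfNat.ofNat_ne_zero, not_false_eq_true, zero_pow, neg_zero,
    zero_mul, zero_div, exp_zero, integral_inv_one_add_sq, arctan_zero, sub_zero]
  ring

lemma hasDerivAt_integral_owenT_integrand (c h₀ : ℝ) :
    HasDerivAt (fun h => ∫ t in (0:ℝ)..c, exp (-h ^ 2 * (1 + t ^ 2) / 2) / (1 + t ^ 2))
      (∫ t in (0:ℝ)..c, -h₀ * exp (-h₀ ^ 2 * (1 + t ^ 2) / 2)) h₀ := by
  have hF : ∀ h : ℝ, Continuous fun t : ℝ => exp (-h ^ 2 * (1 + t ^ 2) / 2) / (1 + t ^ 2) :=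
    fun h => by fun_prop (disch := intro t; positivity)
  have hF' : Continuous fun t : ℝ => -h₀ * exp (-h₀ ^ 2 * (1 + t ^ 2) / 2) := by fun_prop
  refine (intervalIntegral.hasDerivAt_integral_of_dominated_loc_of_deriv_le
    (F' := fun h t => -h * exp (-h ^ 2 * (1 + t ^ 2) / 2)) (bound := fun _ => |h₀| + 1)
    (Metric.ball_mem_nhds h₀ one_pos)
    (.of_forall fun h => (hF h).aestronglyMeasurable.restrict)
    ((hF h₀).intervalIntegrable 0 c) hF'.aestronglyMeasurable.restrict ?_
    intervalIntegrable_const ?_).2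
  · refine .of_forall fun t _ h hh => ?_
    have hexp : exp (-h ^ 2 * (1 + t ^ 2) / 2) ≤ 1 := exp_le_one_iff.2 (by nlinarith)
    have hh' : |h| ≤ |h₀| + 1 := by
      have := abs_sub_abs_le_abs_sub h h₀
      rw [Metric.mem_ball, Real.dist_eq] at hh
      linarith
    rw [norm_mul, norm_neg, Real.norm_eq_abs, Real.norm_of_nonneg (exp_nonneg _)]
    exact (mul_le_of_le_one_right (abs_nonneg h) hexp).trans hh'
  · refine .of_forall fun t _ h _ => ?_
    have hq := ((hasDerivAt_pow 2 h).fun_neg.mul_const (1 + t ^ 2)).div_const 2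
    refine (hq.exp.div_const _).congr_deriv ?_
    field_simp
    ring

lemma integral_neg_mul_exp_neg_sq_mul_one_add_sq (c h : ℝ) :
    ∫ t in (0:ℝ)..c, -h * exp (-h ^ 2 * (1 + t ^ 2) / 2)
      = -(√2 * √π / 2) * exp (-h ^ 2 / 2) * erf (h / √2 * c) := by
  have h2 : √2 ^ 2 = 2 := sq_sqrt (by norm_num)
  have hsplit : ∀ t : ℝ, -h * exp (-h ^ 2 * (1 + t ^ 2) / 2)
      = -√2 * exp (-h ^ 2 / 2) * (h / √2 * exp (-(h / √2 * t) ^ 2)) := fun t => by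
    rw [show -(h / √2 * t) ^ 2 = -h ^ 2 * t ^ 2 / 2 by rw [div_mul_eq_mul_div, div_pow, h2]; ring,
      show -h ^ 2 * (1 + t ^ 2) / 2 = -h ^ 2 / 2 + -h ^ 2 * t ^ 2 / 2 by ring, exp_add]
    field_simp
  simp_rw [hsplit, intervalIntegral.integral_const_mul, mul_integral_exp_neg_mul_sq]
  ring

lemma hasDerivAt_owenT_left (c x : ℝ) :
    HasDerivAt (fun h => owenT h c) (-(exp (-x ^ 2 / 2) * erf (x / √2 * c)) / (2 * √2 * √π)) x := by
  have hT := (hasDerivAt_integral_owenT_integrand c x).const_mul (1 / (2 * π))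
  rw [integral_neg_mul_exp_neg_sq_mul_one_add_sq] at hT
  refine hT.congr_deriv ?_
  have hπ : √π ^ 2 = π := sq_sqrt pi_pos.le
  have h2 : √2 ^ 2 = 2 := sq_sqrt (by norm_num)
  field_simp
  rw [hπ, h2]

lemma hasDerivAt_owenT_sqrt_two_mul (a c b : ℝ) :
    HasDerivAt (fun b => owenT (√2 * a * b) c)
      (-(a / (2 * √π)) * exp (-(a * b) ^ 2) * erf (a * c * b)) b := by
  refine ((hasDerivAt_owenT_left c _).comp b ((hasDerivAt_id b).const_mul _)).congr_deriv ?_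
  have h2 : √2 ^ 2 = 2 := sq_sqrt (by norm_num)
  simp only [id, mul_one]
  rw [show √2 * a * b / √2 * c = a * c * b by field_simp,
    show -(√2 * a * b) ^ 2 / 2 = -(a * b) ^ 2 by linear_combination (-(a * b) ^ 2 / 2) * h2]
  field_simp

/-- for `b ∈ ℝ` and `a > 0`,
`∫₀^b e^{−x²} erfc(ax) dx = (1/(2√π a)) [−4πa T(√2 a b, 1/a)
  + πa erf(b) erfc(ab) + 2a arctan(1/a)]`. -/
theorem integral_exp_mul_erfc (a b : ℝ) (ha : 0 < a) :
    ∫ x in (0:ℝ)..b, Real.exp (-x ^ 2) * erfc (a * x)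
      = (1 / (2 * Real.sqrt π * a)) *
        (-(4 * π * a) * owenT (Real.sqrt 2 * a * b) (1 / a)
          + π * a * erf b * erfc (a * b)
          + 2 * a * Real.arctan (1 / a)) := by
  have hπ : √π ^ 2 = π := sq_sqrt pi_pos.le
  have hderiv : ∀ x, HasDerivAt (fun b => (1 / (2 * √π * a)) *
      (-(4 * π * a) * owenT (√2 * a * b) (1 / a) + π * a * erf b * erfc (a * b)
        + 2 * a * arctan (1 / a))) (exp (-x ^ 2) * erfc (a * x)) x := by
    intro x
    have hT := hasDerivAt_owenT_sqrt_two_mul a (1 / a) x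
    rw [mul_one_div_cancel ha.ne', one_mul] at hT
    have hP := ((hasDerivAt_erf x).const_mul (π * a)).mul
      ((hasDerivAt_erfc (a * x)).comp x ((hasDerivAt_id x).const_mul a))
    refine ((((hT.const_mul (-(4 * π * a))).add hP).add_const
      (2 * a * arctan (1 / a))).const_mul (1 / (2 * √π * a))).congr_deriv ?_
    simp only [Function.comp_apply, mul_one, erfc]
    field_simp
    rw [hπ]
    ring
  rw [intervalIntegral.integral_eq_sub_of_hasDerivAt (fun x _ => hderiv x)
    ((by fun_prop : Continuous fun x => exp (-x ^ 2) * erfc (a * x)).intervalIntegrable _ _),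
    sub_eq_self, mul_zero, mul_zero, owenT_zero_left, erf_zero]
  field_simp
  ring
end
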